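/- In the braid group Br_n presented by Artin's two-generator presentation (generators σ₁, σ with relations σ₁σⁱσ₁σ⁻ⁱ = σⁱσ₁σ⁻ⁱσ₁ for 2 ≤ i ≤ n/2 and σⁿ = (σσ₁)ⁿ⁻¹), the element σⁿ is central. -/
import Mathlib


/-- Artin's two-generator relators: generator `true` is `σ₁`, generator `false` is `σ`. -/
def artinTwoGenRels (n : ℕ) : Set (FreeGroup Bool) :=
  {r | ∃ i : ℕ, 2 ≤ i ∧ i ≤ n / 2 ∧
      r = .of true * (.of false) ^ i * .of true * ((.of false : FreeGroup Bool) ^ i)⁻¹ *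
        ((.of false : FreeGroup Bool) ^ i * .of true * ((.of false : FreeGroup Bool) ^ i)⁻¹ *
          .of true)⁻¹} ∪
  {(.of false : FreeGroup Bool) ^ n * ((.of false * .of true : FreeGroup Bool) ^ (n - 1))⁻¹}

/-- In the two-generator presentation of the braid group, `σ^n` is central. -/
theorem sigma_pow_n_central (n : ℕ) (hn : 2 ≤ n) :
    (PresentedGroup.of false : PresentedGroup (artinTwoGenRels n)) ^ n ∈
      Subgroup.center (PresentedGroup (artinTwoGenRels n)) := by
  set s : PresentedGroup (artinTwoGenRels n) := PresentedGroup.of false with hs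
  set t : PresentedGroup (artinTwoGenRels n) := PresentedGroup.of true with ht
  -- the power relation holds in the quotient
  have hrel : s ^ n = (s * t) ^ (n - 1) := by
    have hmem : ((.of false : FreeGroup Bool) ^ n *
        ((.of false * .of true : FreeGroup Bool) ^ (n - 1))⁻¹) ∈ artinTwoGenRels n :=
      Or.inr rfl
    have h1 : PresentedGroup.mk (artinTwoGenRels n)
        ((.of false : FreeGroup Bool) ^ n *
          ((.of false * .of true : FreeGroup Bool) ^ (n - 1))⁻¹) = 1 :=
      (QuotientGroup.eq_one_iff _).2 (Subgroup.subset_normalClosure hmem)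
    have := h1
    simp only [map_mul, map_pow, map_inv] at this
    rw [mul_inv_eq_one] at this
    exact this
  -- σ^n commutes with t
  have hcomm_st : Commute (s ^ n) (s * t) := by
    rw [hrel]; exact (Commute.refl (s * t)).pow_left _
  have hcomm_s : Commute (s ^ n) s := (Commute.refl s).pow_left _
  have hcomm_t : Commute (s ^ n) t := by
    have := hcomm_s.inv_right.mul_right hcomm_st
    simpa [mul_assoc] using this
  rw [Subgroup.mem_center_iff]
  intro g
  have hg : g ∈ Subgroup.centralizer {s ^ n} := by
    refine PresentedGroup.generated_by _ _ (fun j => ?_) g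
    rw [Subgroup.mem_centralizer_iff]
    rintro h rfl
    cases j
    · exact hcomm_s.eq
    · exact hcomm_t.eq
  exact (Subgroup.mem_centralizer_iff.1 hg _ rfl).symm
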